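/- arXiv:1105.1259 — 4 statements merged into one kernel-verified Lean document; each statement's English description precedes it below -/
import Mathlib

section
/- Let r ≥ 3 and m₁ ≥ m₂ ≥ … ≥ m_r ≥ 2 be integers, Θ := −2 + Σᵢ(1 − 1/mᵢ), and suppose Θ > 0. Let M := max{1/6, (r−3)/2}, let β be a positive integer with m₁ ≤ 2β, and set K := 2βΘ. Then m₁ ≤ (K + 1)/M. -/
theorem m1_bound (r : ℕ) (hr : 3 ≤ r) (m : Fin r → ℤ)
    (hm2 : ∀ i, 2 ≤ m i)
    (hmono : ∀ i j : Fin r, i ≤ j → m j ≤ m i)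
    (Θ : ℚ) (hΘdef : Θ = -2 + ∑ i, (1 - 1 / (m i : ℚ))) (hΘ : 0 < Θ)
    (M : ℚ) (hM : M = max (1 / 6 : ℚ) (((r : ℚ) - 3) / 2))
    (β : ℤ) (hβ : 0 < β) (hm1β : (m ⟨0, by omega⟩ : ℚ) ≤ 2 * β)
    (K : ℚ) (hK : K = 2 * β * Θ) :
    (m ⟨0, by omega⟩ : ℚ) ≤ (K + 1) / M := by
  have hr0 : 0 < r := by omega
  set i0 : Fin r := ⟨0, hr0⟩ with hi0
  set A : ℚ := (m i0 : ℚ) with hA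
  have hApos : (0:ℚ) < A := by
    have := hm2 i0
    have : (2:ℚ) ≤ A := by rw [hA]; exact_mod_cast this
    linarith
  have hinv : ∀ i : Fin r, 1 / (m i : ℚ) ≤ 1/2 := by
    intro i
    have h2 : (2:ℚ) ≤ (m i : ℚ) := by exact_mod_cast hm2 i
    have : (0:ℚ) < (m i : ℚ) := by linarith
    rw [div_le_div_iff₀ this (by norm_num)]
    linarith
  have hMpos : 0 < M := by
    rw [hM]
    exact lt_of_lt_of_le (by norm_num) (le_max_left _ _)
  -- general bound: (r-3)/2 ≤ Θ + 1/A
  have keyA : ((r:ℚ) - 3)/2 ≤ Θ + 1/A := by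
    have hsum : ∑ i, (1 - 1/(m i:ℚ))
        = (1 - 1/A) + ∑ i ∈ Finset.univ.erase i0, (1 - 1/(m i:ℚ)) :=
      (Finset.add_sum_erase _ _ (Finset.mem_univ i0)).symm
    have hcard : (Finset.univ.erase i0).card = r - 1 := by
      rw [Finset.card_erase_of_mem (Finset.mem_univ i0)]
      simp
    have hbound : ((r - 1 : ℕ) : ℚ) * (1/2)
        ≤ ∑ i ∈ Finset.univ.erase i0, (1 - 1/(m i:ℚ)) := by
      have := Finset.card_nsmul_le_sum (Finset.univ.erase i0)
        (fun i => (1 - 1/(m i:ℚ))) (1/2) (fun i _ => by have := hinv i; linarith)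
      rw [hcard] at this
      simpa [nsmul_eq_mul] using this
    rw [Nat.cast_sub (by omega)] at hbound
    push_cast at hbound
    rw [hΘdef, hsum]
    linarith
  have key : M ≤ Θ + 1/A := by
    rw [hM, max_le_iff]
    refine ⟨?_, keyA⟩
    rcases Nat.lt_or_ge r 4 with h4 | h4
    · -- r = 3
      have hr3 : r = 3 := by omega
      subst hr3
      have e0 : (⟨0, hr0⟩ : Fin 3) = 0 := rfl
      rw [Fin.sum_univ_three] at hΘdef
      set b : ℚ := (m 1 : ℚ) with hb
      set c : ℚ := (m 2 : ℚ) with hc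
      have hbpos : (2:ℚ) ≤ b := by rw [hb]; exact_mod_cast hm2 1
      have hcpos : (2:ℚ) ≤ c := by rw [hc]; exact_mod_cast hm2 2
      have hcb : c ≤ b := by rw [hb, hc]; exact_mod_cast hmono 1 2 (by decide)
      have hb3 : (3:ℚ) ≤ b := by
        by_contra hcon
        have hb2 : (m 1 : ℤ) = 2 := by
          have := hm2 1
          have hbl : (b:ℚ) < 3 := lt_of_not_ge hcon
          rw [hb] at hbl
          have hb2' : (m 1 : ℤ) < 3 := by exact_mod_cast hbl
          omega
        have hc2 : (m 2 : ℤ) = 2 := by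
          have := hm2 2
          have := hmono 1 2 (by decide)
          omega
        have hbv : b = 2 := by rw [hb, hb2]; norm_num
        have hcv : c = 2 := by rw [hc, hc2]; norm_num
        have hApos' : 0 < 1/A := by positivity
        rw [hbv, hcv] at hΘdef
        have hΘval : Θ = -(1/A) := by
          rw [hΘdef]; show -2 + (1 - 1/A + (1 - 1/2) + (1 - 1/2)) = -(1/A); ring
        rw [hΘval] at hΘ
        linarith
      have h1b : 1/b ≤ 1/3 := by
        rw [div_le_div_iff₀ (by linarith) (by norm_num)]; linarith
      have h1c : 1/c ≤ 1/2 := by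
        rw [div_le_div_iff₀ (by linarith) (by norm_num)]; linarith
      have hAeq : (m (⟨0, hr0⟩ : Fin 3) : ℚ) = (m 0 : ℚ) := rfl
      rw [hΘdef]
      rw [hA, hAeq]
      linarith
    · -- r ≥ 4: (r-3)/2 ≥ 1/2 ≥ 1/6
      have : (4:ℚ) ≤ (r:ℚ) := by exact_mod_cast h4
      linarith
  have hKA : Θ * A ≤ K := by
    rw [hK]
    have hβ' : (0:ℚ) < (β:ℚ) := by exact_mod_cast hβ
    nlinarith
  have hMA : M * A ≤ K + 1 := by
    have := mul_le_mul_of_nonneg_right key (le_of_lt hApos)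
    rw [add_mul, div_mul_cancel₀ _ (ne_of_gt hApos)] at this
    linarith
  rw [le_div_iff₀ hMpos]
  linarith [hMA]
end

section
/- Let C be a set, G a group with a subgroup G⁰ of index 2, an injection of G⁰ into the permutations (bijections) of C, a fixed element τ' ∈ G \ G⁰ with τ := τ'² ∈ G⁰, and φ : G⁰ → G⁰ the automorphism φ(h) = τ' h τ'⁻¹. Then the formulas g·(x,y) := (g·x, φ(g)·y) and (τ'g)·(x,y) := (φ(g)·y, (τg)·x) for g ∈ G⁰ define a group action of G on C × C. -/
theorem mixed_action_exists (C : Type*) (G : Type*) [Group G]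
    (G0 : Subgroup G) (hind : G0.index = 2)
    (ρ : G0 →* Equiv.Perm C) (hρ : Function.Injective ρ)
    (τ' : G) (hτ' : τ' ∉ G0) (hτ : τ' ^ 2 ∈ G0)
    (hφ : ∀ h ∈ G0, τ' * h * τ'⁻¹ ∈ G0) :
    ∃ ψ : G →* Equiv.Perm (C × C),
      (∀ g : G, ∀ hg : g ∈ G0, ∀ x y : C,
        ψ g (x, y) = (ρ ⟨g, hg⟩ x, ρ ⟨τ' * g * τ'⁻¹, hφ g hg⟩ y)) ∧
      (∀ g : G, ∀ hg : g ∈ G0, ∀ x y : C,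
        ψ (τ' * g) (x, y) =
          (ρ ⟨τ' * g * τ'⁻¹, hφ g hg⟩ y, ρ ⟨τ' ^ 2 * g, mul_mem hτ hg⟩ x)) := by
  classical
  have hτinv : τ'⁻¹ ∉ G0 := fun h => hτ' (by simpa using inv_mem h)
  -- index-2 multiplication rule
  have hmul : ∀ {a b : G}, a * b ∈ G0 ↔ (a ∈ G0 ↔ b ∈ G0) := fun {a b} =>
    Subgroup.mul_mem_iff_of_index_two hind
  have mem1 : ∀ {g : G}, g ∉ G0 → g * τ'⁻¹ ∈ G0 := fun {g} hg =>
    hmul.2 ⟨fun h => absurd h hg, fun h => absurd h hτinv⟩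
  have mem2 : ∀ {g : G}, g ∉ G0 → τ' * g ∈ G0 := fun {g} hg =>
    hmul.2 ⟨fun h => absurd h hτ', fun h => absurd h hg⟩
  -- congruence helper
  have ρcongr : ∀ (u v : G) (hu : u ∈ G0) (hv : v ∈ G0) (x : C), u = v →
      ρ ⟨u, hu⟩ x = ρ ⟨v, hv⟩ x := by
    rintro u v hu hv x rfl; rfl
  have ρmul : ∀ (a b : G0) (x : C), ρ (a * b) x = ρ a (ρ b x) := by
    intro a b x; rw [map_mul]; rfl
  -- the underlying function
  set f : G → Equiv.Perm (C × C) := fun g =>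
    if hg : g ∈ G0 then
      Equiv.prodCongr (ρ ⟨g, hg⟩) (ρ ⟨τ' * g * τ'⁻¹, hφ g hg⟩)
    else
      (Equiv.prodComm C C).trans
        (Equiv.prodCongr (ρ ⟨g * τ'⁻¹, mem1 hg⟩) (ρ ⟨τ' * g, mem2 hg⟩)) with hf
  have fpos : ∀ (g : G) (hg : g ∈ G0) (x y : C),
      f g (x, y) = (ρ ⟨g, hg⟩ x, ρ ⟨τ' * g * τ'⁻¹, hφ g hg⟩ y) := by
    intro g hg x y; rw [hf]; simp [dif_pos hg]
  have fneg : ∀ (g : G) (hg : g ∉ G0) (x y : C),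
      f g (x, y) = (ρ ⟨g * τ'⁻¹, mem1 hg⟩ y, ρ ⟨τ' * g, mem2 hg⟩ x) := by
    intro g hg x y; rw [hf]; simp [dif_neg hg]
  have honeaux : ∀ (h : (1 : G) ∈ G0) (z : C), ρ ⟨1, h⟩ z = z := by
    intro h z
    have : (⟨(1 : G), h⟩ : G0) = 1 := rfl
    rw [this, map_one]; rfl
  have hone : f 1 = 1 := by
    refine Equiv.ext ?_
    rintro ⟨x, y⟩
    rw [fpos 1 (one_mem _) x y,
      ρcongr (τ' * 1 * τ'⁻¹) 1 _ (one_mem _) y (by group), honeaux, honeaux]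
    rfl
  have hmulf : ∀ a b : G, f (a * b) = f a * f b := by
    intro a b
    refine Equiv.ext ?_
    rintro ⟨x, y⟩
    have : (f a * f b) (x, y) = f a (f b (x, y)) := rfl
    rw [this]
    by_cases ha : a ∈ G0 <;> by_cases hb : b ∈ G0
    · have hab : a * b ∈ G0 := mul_mem ha hb
      rw [fpos b hb, fpos a ha, fpos (a * b) hab]
      refine Prod.ext ?_ ?_
      · exact (ρcongr _ _ hab (mul_mem ha hb) x rfl).trans (ρmul ⟨a, ha⟩ ⟨b, hb⟩ x)
      · rw [ρcongr _ ((τ' * a * τ'⁻¹) * (τ' * b * τ'⁻¹)) _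
          (mul_mem (hφ a ha) (hφ b hb)) y (by group)]
        exact ρmul ⟨_, hφ a ha⟩ ⟨_, hφ b hb⟩ y
    · have hab : a * b ∉ G0 := fun h => hb (by simpa using mul_mem (inv_mem ha) h)
      rw [fneg b hb, fpos a ha, fneg (a * b) hab]
      refine Prod.ext ?_ ?_
      · rw [ρcongr _ (a * (b * τ'⁻¹)) _ (mul_mem ha (mem1 hb)) y (by group)]
        exact ρmul ⟨a, ha⟩ ⟨_, mem1 hb⟩ y
      · rw [ρcongr _ ((τ' * a * τ'⁻¹) * (τ' * b)) _
          (mul_mem (hφ a ha) (mem2 hb)) x (by group)]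
        exact ρmul ⟨_, hφ a ha⟩ ⟨_, mem2 hb⟩ x
    · have hab : a * b ∉ G0 := fun h => ha (by simpa using mul_mem h (inv_mem hb))
      rw [fpos b hb, fneg a ha, fneg (a * b) hab]
      refine Prod.ext ?_ ?_
      · rw [ρcongr _ ((a * τ'⁻¹) * (τ' * b * τ'⁻¹)) _
          (mul_mem (mem1 ha) (hφ b hb)) y (by group)]
        exact ρmul ⟨_, mem1 ha⟩ ⟨_, hφ b hb⟩ y
      · rw [ρcongr _ ((τ' * a) * b) _ (mul_mem (mem2 ha) hb) x (by group)]
        exact ρmul ⟨_, mem2 ha⟩ ⟨b, hb⟩ x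
    · have hab : a * b ∈ G0 := hmul.2 ⟨fun h => absurd h ha, fun h => absurd h hb⟩
      rw [fneg b hb, fneg a ha, fpos (a * b) hab]
      refine Prod.ext ?_ ?_
      · rw [ρcongr _ ((a * τ'⁻¹) * (τ' * b)) _ (mul_mem (mem1 ha) (mem2 hb)) x
          (by group)]
        exact ρmul ⟨_, mem1 ha⟩ ⟨_, mem2 hb⟩ x
      · rw [ρcongr _ ((τ' * a) * (b * τ'⁻¹)) _ (mul_mem (mem2 ha) (mem1 hb)) y
          (by group)]
        exact ρmul ⟨_, mem2 ha⟩ ⟨_, mem1 hb⟩ y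
  refine ⟨⟨⟨f, hone⟩, hmulf⟩, ?_, ?_⟩
  · intro g hg x y; exact fpos g hg x y
  · intro g hg x y
    have hng : τ' * g ∉ G0 := fun h => hτ' (by simpa using mul_mem h (inv_mem hg))
    rw [show ((⟨⟨f, hone⟩, hmulf⟩ : G →* Equiv.Perm (C × C)) (τ' * g)) = f (τ' * g)
      from rfl]
    rw [fneg (τ' * g) hng x y]
    refine Prod.ext ?_ ?_
    · exact ρcongr _ _ _ (hφ g hg) y (by group)
    · exact ρcongr _ _ _ (mul_mem hτ hg) x (by rw [pow_two, mul_assoc])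
end

section
/- With the mixed action of G on C × C defined by g·(x,y) = (g·x, φ(g)·y) and (τ'g)·(x,y) = (φ(g)·y, (τg)·x) for g ∈ G⁰ (where τ = τ'², φ(h) = τ'hτ'⁻¹): if h ∈ G⁰ satisfies (τ'h)² = 1 in G, then for every x ∈ C the point (x, (τh)·x) is fixed by τ'h. In particular, if the extension 1 → G⁰ → G → ℤ/2 → 1 splits, then the element τ'h of order 2 fixes pointwise the graph {(x, (τh)·x) : x ∈ C}. -/
theorem mixed_action_fixes_graph (C : Type*) (G : Type*) [Group G]
    (G0 : Subgroup G) (hind : G0.index = 2)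
    (ρ : G0 →* Equiv.Perm C)
    (τ' : G) (hτ' : τ' ∉ G0) (hτ : τ' ^ 2 ∈ G0)
    (hφ : ∀ g ∈ G0, τ' * g * τ'⁻¹ ∈ G0)
    (ψ : G →* Equiv.Perm (C × C))
    (hψ0 : ∀ g : G, ∀ hg : g ∈ G0, ∀ x y : C,
      ψ g (x, y) = (ρ ⟨g, hg⟩ x, ρ ⟨τ' * g * τ'⁻¹, hφ g hg⟩ y))
    (hψ1 : ∀ g : G, ∀ hg : g ∈ G0, ∀ x y : C,
      ψ (τ' * g) (x, y) =
        (ρ ⟨τ' * g * τ'⁻¹, hφ g hg⟩ y, ρ ⟨τ' ^ 2 * g, mul_mem hτ hg⟩ x))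
    (h : G) (hh : h ∈ G0) (hsq : (τ' * h) ^ 2 = 1) :
    ∀ p : C × C, p ∈ {q : C × C | ∃ x : C, q = (x, ρ ⟨τ' ^ 2 * h, mul_mem hτ hh⟩ x)} →
      ψ (τ' * h) p = p := by
  rintro p ⟨x, rfl⟩
  rw [hψ1 h hh]
  have key : (⟨τ' * h * τ'⁻¹, hφ h hh⟩ : G0) * ⟨τ' ^ 2 * h, mul_mem hτ hh⟩ = 1 := by
    ext
    simp only [Subgroup.coe_mul, OneMemClass.coe_one]
    calc τ' * h * τ'⁻¹ * (τ' ^ 2 * h) = (τ' * h) * (τ' * h) := by group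
    _ = (τ' * h) ^ 2 := (sq _).symm
    _ = 1 := hsq
  have : ρ ⟨τ' * h * τ'⁻¹, hφ h hh⟩ (ρ ⟨τ' ^ 2 * h, mul_mem hτ hh⟩ x) = x := by
    rw [← Equiv.Perm.mul_apply, ← map_mul, key, map_one, Equiv.Perm.one_apply]
  rw [this]
end

section
/- Let G be a group generated by elements a, b, c with a² = abc = 1 (so a = a⁻¹ and c = b⁻¹a⁻¹). Then the elements aba, b, c² satisfy (aba)·b·c² = 1, and the subgroup H := ⟨aba, b, c²⟩ has index at most 2 in G. If moreover a has order exactly 2, b order exactly 3, and c order exactly 8, then aba has order 3, b has order 3, and c² has order 4. -/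
/-!
Write `H = ⟨aba, b, c²⟩`. From `abc = 1` we get `c = b⁻¹a⁻¹`, so `(aba)·b·c² = 1` is a free-group
identity and `a⁻¹c²a = (aba)⁻¹b⁻¹`; with `a² = 1` also `a⁻¹(aba)a = b` and `a⁻¹ba = aba`. Hence the
involution `a` normalizes `H`, and since `b, c ∈ H ⊔ ⟨a⟩` the quotient `G ⧸ H` is generated by the
image of `a`, so it has order at most `2`. The orders follow because `aba` is conjugate to `b` and
`c²` has order `8 / gcd(8, 2)`.
-/

namespace Subgroup

variable {G : Type*} [Group G] {H : Subgroup G} {a : G}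

theorem mem_normalizer_of_sq_eq_one (ha : a ^ 2 = 1) (hconj : ∀ h ∈ H, a⁻¹ * h * a ∈ H) :
    a ∈ normalizer (H : Set G) := by
  refine mem_normalizer_iff''.mpr fun h ↦ ⟨hconj h, fun hh ↦ ?_⟩
  have hconj_twice : a⁻¹ * (a⁻¹ * h * a) * a = (a ^ 2)⁻¹ * h * a ^ 2 := by rw [sq]; group
  simpa only [hconj_twice, ha, inv_one, one_mul, mul_one] using hconj _ hh

theorem index_le_of_sup_zpowers_eq_top (hnorm : a ∈ normalizer (H : Set G))
    (hgen : H ⊔ zpowers a = ⊤) {n : ℕ} (hn : 0 < n) (han : a ^ n ∈ H) : H.index ≤ n := by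
  have : H.Normal := normalizer_eq_top_iff.mp <|
    eq_top_mono (sup_le le_normalizer (zpowers_le.mpr hnorm)) hgen
  have htop : zpowers (a : G ⧸ H) = ⊤ := by
    have := congrArg (map (QuotientGroup.mk' H)) hgen
    rwa [map_sup, QuotientGroup.map_mk'_self, bot_sup_eq, MonoidHom.map_zpowers,
      ← MonoidHom.range_eq_map, QuotientGroup.range_mk'] at this
  rw [index_eq_card, ← orderOf_eq_card_of_zpowers_eq_top htop]
  exact orderOf_le_of_pow_eq_one hn ((QuotientGroup.eq_one_iff _).mpr han)

end Subgroup

open Subgroup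

section SphericalGenerators

variable {G : Type*} [Group G] {a b c : G}

theorem mul_mul_sq_eq_one_of_mul_mul_eq_one (habc : a * b * c = 1) :
    a * b * a * b * c ^ 2 = 1 := by
  rw [eq_inv_of_mul_eq_one_right habc, sq]
  group

theorem inv_mul_mul_mem_closure_of_mul_mul_eq_one (ha : a ^ 2 = 1) (habc : a * b * c = 1) :
    ∀ h ∈ closure {a * b * a, b, c ^ 2}, a⁻¹ * h * a ∈ closure {a * b * a, b, c ^ 2} := by
  set H := closure {a * b * a, b, c ^ 2}
  have hinv : a⁻¹ = a := inv_eq_of_mul_eq_one_right (by rw [← sq, ha])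
  have hc : c = b⁻¹ * a⁻¹ := by rw [eq_inv_of_mul_eq_one_right habc, mul_inv_rev]
  have haba : a * b * a ∈ H := subset_closure (by simp)
  have hb : b ∈ H := subset_closure (by simp)
  have hle : H ≤ H.comap (MulAut.conj a⁻¹).toMonoidHom := by
    refine (closure_le _).mpr ?_
    simp only [Set.insert_subset_iff, Set.singleton_subset_iff, SetLike.mem_coe, mem_comap,
      MulEquiv.coe_toMonoidHom, MulAut.conj_apply, inv_inv]
    refine ⟨?_, ?_, ?_⟩
    · have haba_conj : a⁻¹ * (a * b * a) * a = b * a ^ 2 := by rw [sq]; group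
      rwa [haba_conj, ha, mul_one]
    · rwa [hinv]
    · have hsq_conj : a⁻¹ * c ^ 2 * a = (a * b * a)⁻¹ * b⁻¹ := by rw [hc, sq]; group
      rw [hsq_conj]
      exact H.mul_mem (H.inv_mem haba) (H.inv_mem hb)
  exact fun h hh ↦ by simpa using hle hh

theorem closure_sup_zpowers_eq_top (hgen : closure {a, b, c} = ⊤) (habc : a * b * c = 1) :
    closure {a * b * a, b, c ^ 2} ⊔ zpowers a = ⊤ := by
  set H := closure {a * b * a, b, c ^ 2}
  have hb : b ∈ H ⊔ zpowers a := mem_sup_left (subset_closure (by simp))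
  have ha : a ∈ H ⊔ zpowers a := mem_sup_right (mem_zpowers a)
  have hc : c = b⁻¹ * a⁻¹ := by rw [eq_inv_of_mul_eq_one_right habc, mul_inv_rev]
  refine eq_top_mono ((closure_le _).mpr ?_) hgen
  simp only [Set.insert_subset_iff, Set.singleton_subset_iff, SetLike.mem_coe]
  exact ⟨ha, hb, hc ▸ mul_mem (inv_mem hb) (inv_mem ha)⟩

end SphericalGenerators

theorem index_two_subgroup_of_238 (G : Type*) [Group G] (a b c : G)
    (hgen : Subgroup.closure {a, b, c} = ⊤)
    (ha : a ^ 2 = 1) (habc : a * b * c = 1) :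
    (a * b * a) * b * c ^ 2 = 1 ∧
    (Subgroup.closure {a * b * a, b, c ^ 2}).index ≤ 2 ∧
    (orderOf a = 2 → orderOf b = 3 → orderOf c = 8 →
      orderOf (a * b * a) = 3 ∧ orderOf b = 3 ∧ orderOf (c ^ 2) = 4) := by
  refine ⟨mul_mul_sq_eq_one_of_mul_mul_eq_one habc, ?_, fun _ hb hc ↦ ⟨?_, hb, ?_⟩⟩
  · exact index_le_of_sup_zpowers_eq_top
      (mem_normalizer_of_sq_eq_one ha (inv_mul_mul_mem_closure_of_mul_mul_eq_one ha habc))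
      (closure_sup_zpowers_eq_top hgen habc) two_pos (ha ▸ one_mem _)
  · have hconj : SemiconjBy a b (a * b * a) := by
      rw [SemiconjBy, mul_assoc _ a a, ← sq, ha, mul_one]
    rw [← hconj.orderOf_eq, hb]
  · rw [orderOf_pow' c two_ne_zero, hc]
    rfl
end
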